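/- arXiv:0708.0614 — 5 statements merged into one kernel-verified Lean document; each statement's English description precedes it below -/
import Mathlib

section
/- Let a, b > 0, let B be a random variable with the Beta(a,b) distribution, and let M be a nonnegative random variable independent of B. Then for every λ ≥ 0, E[(1 + λBM)^{-(a+b)}] = E[(1 + λM)^{-a}]. (This is the Cauchy–Stieltjes transform form of the beta-scaling identity of Theorem 2.1: multiplying a Dirichlet mean of order a by an independent Beta(a,b) variable produces a Dirichlet mean of order a+b.) -/
/-!
Conditioning on `M`, it suffices to show `E[(1 + c B)^(-(a+b))] = (1 + c)^(-a)` for a Beta(a,b)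
variable `B` and a constant `c ≥ 0` (the identity holds for every `c > -1`). In the beta integral
the substitution `y = u / (1 + c (1 - u))` maps `(0,1)` onto itself and turns
`y^(a-1) (1-y)^(b-1) (1 + c y)^(-(a+b)) dy` into `(1 + c)^(-a) u^(a-1) (1-u)^(b-1) du`.
-/

open MeasureTheory ProbabilityTheory

/-- The Beta(a,b) distribution on (0,1) with density
`y^(a-1) (1-y)^(b-1) / B(a,b)` where `B(a,b) = Γ(a)Γ(b)/Γ(a+b)`. -/
noncomputable def betaMeasure (a b : ℝ) : Measure ℝ :=
  (volume.restrict (Set.Ioo (0:ℝ) 1)).withDensity fun y =>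
    ENNReal.ofReal (Real.Gamma (a + b) / (Real.Gamma a * Real.Gamma b) *
      y ^ (a - 1) * (1 - y) ^ (b - 1))

open Set

theorem integral_Ioo_rpow_mul_one_sub_rpow {a b : ℝ} (ha : 0 < a) (hb : 0 < b) :
    ∫ x in Ioo (0:ℝ) 1, x ^ (a - 1) * (1 - x) ^ (b - 1) = beta a b := by
  have hnorm : ∫ x in Ioo (0:ℝ) 1, 1 / beta a b * x ^ (a - 1) * (1 - x) ^ (b - 1) = 1 := by
    rw [integral_eq_lintegral_of_nonneg_ae, ← lintegral_betaPDF, lintegral_betaPDF_eq_one ha hb,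
      ENNReal.toReal_one]
    · refine ae_restrict_of_forall_mem measurableSet_Ioo fun x hx => ?_
      have := beta_pos ha hb
      have := hx.1
      have : 0 < 1 - x := by linarith [hx.2]
      positivity
    · exact Measurable.aestronglyMeasurable (by fun_prop)
  simp_rw [mul_assoc, integral_const_mul] at hnorm
  field_simp [(beta_pos ha hb).ne'] at hnorm
  linarith

section Substitution

variable {c : ℝ}

noncomputable def betaSubst (c u : ℝ) : ℝ := u / (1 + c * (1 - u))

lemma one_add_mul_one_sub_pos (hc : -1 < c) {u : ℝ} (hu : u ∈ Ioo (0:ℝ) 1) :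
    0 < 1 + c * (1 - u) := by
  nlinarith [hu.1, hu.2]

lemma bijOn_betaSubst (hc : -1 < c) : BijOn (betaSubst c) (Ioo 0 1) (Ioo 0 1) := by
  have hc' : 0 < 1 + c := by linarith
  have hw {u : ℝ} (hu : u ∈ Ioo (0:ℝ) 1) := one_add_mul_one_sub_pos hc hu
  have hcy {y : ℝ} (hy : y ∈ Ioo (0:ℝ) 1) : 0 < 1 + c * y := by nlinarith [hy.1, hy.2]
  refine InvOn.bijOn (f' := fun y => (1 + c) * y / (1 + c * y)) ⟨fun u hu => ?_, fun y hy => ?_⟩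
    (fun u hu => ?_) (fun y hy => ?_)
  · have := hw hu
    simp only [betaSubst]
    field_simp
    rw [show 1 + c * (1 - u) + c * u = 1 + c by ring]
    field_simp
  · have := hcy hy
    simp only [betaSubst]
    field_simp
    rw [show 1 + c * y + c * (1 + c * y - (1 + c) * y) = 1 + c by ring]
    field_simp
  · simp only [betaSubst, mem_Ioo]
    constructor
    · exact div_pos hu.1 (hw hu)
    · rw [div_lt_one (hw hu)]; nlinarith [hu.1, hu.2]
  · simp only [mem_Ioo]
    constructor
    · exact div_pos (mul_pos hc' hy.1) (hcy hy)
    · rw [div_lt_one (hcy hy)]; nlinarith [hy.1, hy.2]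

lemma hasDerivAt_betaSubst {u : ℝ} (hu : 0 < 1 + c * (1 - u)) :
    HasDerivAt (betaSubst c) ((1 + c) / (1 + c * (1 - u)) ^ 2) u := by
  have hden : HasDerivAt (fun u : ℝ => 1 + c * (1 - u)) (-c) u := by
    simpa using (((hasDerivAt_id u).const_sub 1).const_mul c).const_add 1
  have h := (hasDerivAt_id' u).div hden hu.ne'
  rwa [show 1 * (1 + c * (1 - u)) - u * -c = 1 + c by ring] at h

lemma abs_deriv_betaSubst_mul (a b : ℝ) (hc : -1 < c) {u : ℝ} (hu : u ∈ Ioo (0:ℝ) 1) :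
    |(1 + c) / (1 + c * (1 - u)) ^ 2| * (betaSubst c u ^ (a - 1) * (1 - betaSubst c u) ^ (b - 1)
      * (1 + c * betaSubst c u) ^ (-(a + b)))
      = (1 + c) ^ (-a) * (u ^ (a - 1) * (1 - u) ^ (b - 1)) := by
  have hw := one_add_mul_one_sub_pos hc hu
  have hd : 0 < 1 + c := by linarith
  have hu₀ : 0 < u := hu.1
  have hu₁ : 0 < 1 - u := by linarith [hu.2]
  have hsub : 1 - betaSubst c u = (1 + c) * (1 - u) / (1 + c * (1 - u)) := by
    rw [betaSubst]; field_simp; ring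
  have hadd : 1 + c * betaSubst c u = (1 + c) / (1 + c * (1 - u)) := by
    rw [betaSubst]; field_simp; ring
  set w := 1 + c * (1 - u)
  set d := 1 + c
  rw [hsub, hadd, betaSubst, abs_of_pos (by positivity)]
  rw [Real.rpow_def_of_pos (by positivity : 0 < u / w),
    Real.rpow_def_of_pos (by positivity : 0 < d * (1 - u) / w),
    Real.rpow_def_of_pos (by positivity : 0 < d / w), Real.rpow_def_of_pos hd,
    Real.rpow_def_of_pos hu₀, Real.rpow_def_of_pos hu₁,
    Real.log_div hu₀.ne' hw.ne', Real.log_div (by positivity) hw.ne',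
    Real.log_div hd.ne' hw.ne', Real.log_mul hd.ne' hu₁.ne',
    show d / w ^ 2 = Real.exp (Real.log d - 2 * Real.log w) by
      rw [Real.exp_sub, Real.exp_log hd, ← Real.log_rpow hw, Real.exp_log (by positivity)]
      norm_cast]
  simp only [← Real.exp_add, Real.exp_eq_exp]
  ring

theorem integral_Ioo_rpow_mul_one_sub_rpow_mul_one_add_mul_rpow (a b : ℝ) (hc : -1 < c) :
    ∫ y in Ioo (0:ℝ) 1, y ^ (a - 1) * (1 - y) ^ (b - 1) * (1 + c * y) ^ (-(a + b))
      = (1 + c) ^ (-a) * ∫ u in Ioo (0:ℝ) 1, u ^ (a - 1) * (1 - u) ^ (b - 1) := by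
  have hbij := bijOn_betaSubst hc
  conv_lhs => rw [← hbij.image_eq]
  rw [integral_image_eq_integral_abs_deriv_smul measurableSet_Ioo
    (fun u hu => (hasDerivAt_betaSubst (one_add_mul_one_sub_pos hc hu)).hasDerivWithinAt)
    hbij.injOn, ← integral_const_mul]
  exact setIntegral_congr_fun measurableSet_Ioo fun u hu => abs_deriv_betaSubst_mul a b hc hu

end Substitution

lemma ae_betaMeasure_mem_Ioo (a b : ℝ) :
    ∀ᵐ y ∂(_root_.betaMeasure a b), y ∈ Ioo (0:ℝ) 1 :=
  (withDensity_absolutelyContinuous _ _).ae_le (ae_restrict_mem measurableSet_Ioo)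

theorem integral_betaMeasure_one_add_mul_rpow {a b c : ℝ} (ha : 0 < a) (hb : 0 < b)
    (hc : -1 < c) :
    ∫ y, (1 + c * y) ^ (-(a + b)) ∂(_root_.betaMeasure a b) = (1 + c) ^ (-a) := by
  have hB := beta_pos ha hb
  have hC : Real.Gamma (a + b) / (Real.Gamma a * Real.Gamma b) = 1 / beta a b := by
    rw [beta, one_div_div]
  rw [_root_.betaMeasure, integral_withDensity_eq_integral_toReal_smul (by fun_prop)
    (Filter.Eventually.of_forall fun _ => ENNReal.ofReal_lt_top)]
  calc ∫ y in Ioo (0:ℝ) 1, (ENNReal.ofReal (Real.Gamma (a + b) / (Real.Gamma a * Real.Gamma b) *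
        y ^ (a - 1) * (1 - y) ^ (b - 1))).toReal • (1 + c * y) ^ (-(a + b))
      = ∫ y in Ioo (0:ℝ) 1,
          1 / beta a b * (y ^ (a - 1) * (1 - y) ^ (b - 1) * (1 + c * y) ^ (-(a + b))) := by
        refine setIntegral_congr_fun measurableSet_Ioo fun y hy => ?_
        have := hy.1
        have : 0 < 1 - y := by linarith [hy.2]
        rw [hC, ENNReal.toReal_ofReal (by positivity), smul_eq_mul]
        ring
    _ = (1 + c) ^ (-a) := by
        rw [integral_const_mul, integral_Ioo_rpow_mul_one_sub_rpow_mul_one_add_mul_rpow a b hc,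
          integral_Ioo_rpow_mul_one_sub_rpow ha hb]
        field_simp

theorem integrable_one_add_rpow_neg {Ω : Type*} [MeasurableSpace Ω] {P : Measure Ω}
    [IsFiniteMeasure P] {X : Ω → ℝ} {s : ℝ} (hX : AEMeasurable X P) (hX₀ : 0 ≤ᵐ[P] X)
    (hs : 0 ≤ s) : Integrable (fun ω => (1 + X ω) ^ (-s)) P := by
  refine (integrable_const 1).mono'
    ((aemeasurable_const.add hX).pow_const _).aestronglyMeasurable ?_
  filter_upwards [hX₀] with ω hω
  have h1 : 1 ≤ 1 + X ω := by simpa using hω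
  rw [Real.norm_of_nonneg (by positivity)]
  exact Real.rpow_le_one_of_one_le_of_nonpos h1 (by linarith)

theorem ProbabilityTheory.IndepFun.integral_comp_eq_integral_integral
    {Ω α β E : Type*} [MeasurableSpace Ω] [MeasurableSpace α] [MeasurableSpace β]
    [NormedAddCommGroup E] [NormedSpace ℝ E] {P : Measure Ω} [IsFiniteMeasure P]
    {X : Ω → α} {Y : Ω → β} {f : α × β → E} (hXY : IndepFun X Y P)
    (hX : AEMeasurable X P) (hY : AEMeasurable Y P) (hf : StronglyMeasurable f)
    (hfXY : Integrable (fun ω => f (X ω, Y ω)) P) :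
    ∫ ω, f (X ω, Y ω) ∂P = ∫ ω, ∫ x, f (x, Y ω) ∂(P.map X) ∂P := by
  have hmap := hXY.map_prod_eq_prod_map_map hX hY
  have hint : Integrable f ((P.map X).prod (P.map Y)) := by
    rw [← hmap]
    exact (integrable_map_measure hf.aestronglyMeasurable (hX.prodMk hY)).mpr hfXY
  calc ∫ ω, f (X ω, Y ω) ∂P = ∫ p, f p ∂((P.map X).prod (P.map Y)) := by
        rw [← hmap, integral_map (hX.prodMk hY) hf.aestronglyMeasurable]
    _ = ∫ y, ∫ x, f (x, y) ∂(P.map X) ∂(P.map Y) := integral_prod_symm f hint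
    _ = ∫ ω, ∫ x, f (x, Y ω) ∂(P.map X) ∂P :=
        integral_map hY hint.integral_prod_right.aestronglyMeasurable

/-- if `B` is Beta(a,b) distributed and `M` is a nonnegative random
variable independent of `B`, then for every `λ ≥ 0`,
`E[(1 + λ B M)^(-(a+b))] = E[(1 + λ M)^(-a)]`. -/
theorem beta_scaling_cauchy_stieltjes
    {Ω : Type*} [MeasurableSpace Ω] (P : Measure Ω) [IsProbabilityMeasure P]
    (a b : ℝ) (ha : 0 < a) (hb : 0 < b)
    (B M : Ω → ℝ) (hBmeas : Measurable B) (hMmeas : Measurable M)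
    (hB : Measure.map B P = _root_.betaMeasure a b)
    (hMnonneg : ∀ᵐ ω ∂P, 0 ≤ M ω)
    (hindep : IndepFun B M P) :
    ∀ l : ℝ, 0 ≤ l →
      ∫ ω, (1 + l * (B ω * M ω)) ^ (-(a + b)) ∂P
        = ∫ ω, (1 + l * M ω) ^ (-a) ∂P := by
  intro l hl
  have hBmem : ∀ᵐ ω ∂P, B ω ∈ Ioo (0:ℝ) 1 :=
    (ae_map_iff hBmeas.aemeasurable measurableSet_Ioo).mp (hB ▸ ae_betaMeasure_mem_Ioo a b)
  have hint : Integrable (fun ω => (1 + l * (B ω * M ω)) ^ (-(a + b))) P := by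
    refine integrable_one_add_rpow_neg (by fun_prop) ?_ (by linarith)
    filter_upwards [hBmem, hMnonneg] with ω hBω hMω
    exact mul_nonneg hl (mul_nonneg hBω.1.le hMω)
  rw [hindep.integral_comp_eq_integral_integral (f := fun p => (1 + l * (p.1 * p.2)) ^ (-(a + b)))
    hBmeas.aemeasurable hMmeas.aemeasurable (by fun_prop) hint, hB]
  refine integral_congr_ae ?_
  filter_upwards [hMnonneg] with ω hω
  have hmul (y : ℝ) : l * (y * M ω) = l * M ω * y := by ring
  simp_rw [hmul]
  exact integral_betaMeasure_one_add_mul_rpow ha hb (by linarith [mul_nonneg hl hω])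
end

section
/- Let θ > 0 and c > 0. Let M be a positive random variable with Lebesgue density ξ on (0,∞), let G be a random variable with the Gamma(θ,1) distribution independent of M, and let T = G·M, so that T has density g(t) = (t^{θ-1}/Γ(θ)) ∫₀^∞ e^{-t/m} m^{-θ} ξ(m) dm. Set K = E[(1+cM)^{-θ}], and assume 0 < K < ∞. Then E[e^{-cT}] = K, the function t ↦ e^{-t} g(t/c)/(cK) on (0,∞) is a probability density, and it is the density of the random variable G·(cM′/(1+cM′)), where M′ is a random variable with density m ↦ (1+cm)^{-θ} ξ(m)/K on (0,∞), independent of G. (Exponential tilting of a gamma scale mixture, Theorem 3.1.) -/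
/-!
Conditionally on `M = m`, `G · M` is `Gamma(θ, 1/m)`, whose Laplace transform at `c` is
`(1 + cm)^{-θ}`; averaging over `m` gives `E[e^{-cT}] = K`. Conditionally on `M' = m`,
`G · cm/(1+cm)` is `Gamma(θ, (1+cm)/(cm))`; splitting the rate as `1 + 1/(cm)` pulls the factor
`e^{-t}` out of its density, and what remains, averaged against the law `(1+cm)^{-θ} ξ(m)/K dm`
of `M'`, is `g(t/c)/(cK)`. So `t ↦ e^{-t} g(t/c)/(cK)` is the density of `G · cM'/(1+cM')`, and
hence integrates to one. The integral defining `g` converges because `m ↦ e^{-s/m} m^{-θ}` is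
bounded on `(0, ∞)`.
-/

open MeasureTheory ProbabilityTheory
open scoped ENNReal
open Set Real

lemma Real.rpow_mul_exp_neg_mul_le {a s x : ℝ} (ha : 0 < a) (hs : 0 < s) (hx : 0 < x) :
    x ^ a * exp (-(s * x)) ≤ (a / s) ^ a * exp (-a) := by
  have hlog : log (s * x / a) ≤ s * x / a - 1 := log_le_sub_one_of_pos (by positivity)
  rw [log_div (by positivity) ha.ne', log_mul hs.ne' hx.ne'] at hlog
  rw [rpow_def_of_pos hx, rpow_def_of_pos (by positivity), ← exp_add, ← exp_add,
    exp_le_exp, log_div ha.ne' hs.ne']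
  have : a * (s * x / a - 1) = s * x - a := by field_simp
  nlinarith

lemma integrableOn_exp_neg_div_mul_rpow_neg_mul {θ s : ℝ} {ξ : ℝ → ℝ} (hθ : 0 < θ)
    (hs : 0 < s) (hξ : IntegrableOn ξ (Ioi 0)) :
    IntegrableOn (fun m => exp (-s / m) * m ^ (-θ) * ξ m) (Ioi 0) := by
  refine hξ.bdd_mul (c := (θ / s) ^ θ * exp (-θ)) (by fun_prop) ?_
  filter_upwards [ae_restrict_mem measurableSet_Ioi] with m (hm : 0 < m)
  rw [norm_of_nonneg (by positivity), mul_comm, rpow_neg hm.le, ← inv_rpow hm.le, neg_div,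
    div_eq_mul_inv]
  exact rpow_mul_exp_neg_mul_le hθ hs (inv_pos.2 hm)

lemma MeasureTheory.map_mul_const_volume_withDensity {f : ℝ → ℝ≥0∞} (hf : Measurable f)
    {s : ℝ} (hs : s ≠ 0) :
    (volume.withDensity f).map (· * s)
      = volume.withDensity fun y => ENNReal.ofReal |s⁻¹| * f (y / s) := by
  ext A hA
  have hfs : Measurable fun y => f (y / s) := hf.comp (measurable_div_const s)
  rw [Measure.map_apply (measurable_mul_const s) hA, withDensity_apply _ hA,
    withDensity_apply _ (measurable_mul_const s hA), lintegral_const_mul _ hfs,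
    ← smul_eq_mul, ← setLIntegral_smul_measure, ← Real.map_volume_mul_right hs,
    setLIntegral_map hA hfs (measurable_mul_const s)]
  simp_rw [mul_div_cancel_right₀ _ hs]

namespace ProbabilityTheory

variable {a r : ℝ}

lemma measurable_uncurry_gammaPDF (a : ℝ) : Measurable (Function.uncurry (gammaPDF a)) := by
  unfold Function.uncurry gammaPDF gammaPDFReal
  refine ENNReal.measurable_ofReal.comp (Measurable.ite (measurableSet_le measurable_const
    measurable_snd) ?_ measurable_const)
  fun_prop

lemma measurable_gammaPDF (a r : ℝ) : Measurable (gammaPDF a r) :=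
  (measurable_gammaPDFReal a r).ennreal_ofReal

lemma gammaMeasure_eq_withDensity_Ioi (a r : ℝ) :
    gammaMeasure a r = (volume.restrict (Ioi 0)).withDensity (gammaPDF a r) := by
  have : (Ici 0).indicator (gammaPDF a r) = gammaPDF a r := by
    refine indicator_eq_self.2 fun x hx => ?_
    by_contra hx'
    exact hx (gammaPDF_of_neg (not_le.1 hx'))
  rw [Measure.restrict_congr_set Ioi_ae_eq_Ici, ← withDensity_indicator measurableSet_Ici, this,
    gammaMeasure]

lemma ofReal_exp_neg_mul_mul_gammaPDF {b : ℝ} (ha : 0 < a) (hr : 0 < r) (hrb : 0 < r + b)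
    (x : ℝ) :
    ENNReal.ofReal (exp (-(b * x))) * gammaPDF a r x
      = ENNReal.ofReal ((1 + b / r) ^ (-a)) * gammaPDF a (r + b) x := by
  rcases lt_or_ge x 0 with hx | hx
  · simp only [gammaPDF_of_neg hx, mul_zero]
  have hrb' : 1 + b / r = (r + b) / r := by field_simp
  have hΓ := Gamma_pos_of_pos ha
  rw [gammaPDF_of_nonneg hx, gammaPDF_of_nonneg hx, ← ENNReal.ofReal_mul (by positivity), hrb',
    ← ENNReal.ofReal_mul (by positivity)]
  congr 1
  rw [rpow_neg (by positivity), div_rpow hrb.le hr.le]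
  have : exp (-(b * x)) * exp (-(r * x)) = exp (-((r + b) * x)) := by
    rw [← exp_add]; ring_nf
  have h1 : 0 < r ^ a := by positivity
  have h2 : 0 < (r + b) ^ a := by positivity
  rw [← this]
  field_simp

lemma lintegral_exp_neg_mul_gammaMeasure {b : ℝ} (ha : 0 < a) (hr : 0 < r) (hrb : 0 < r + b) :
    ∫⁻ x, ENNReal.ofReal (exp (-(b * x))) ∂gammaMeasure a r
      = ENNReal.ofReal ((1 + b / r) ^ (-a)) := by
  rw [gammaMeasure, lintegral_withDensity_eq_lintegral_mul_non_measurable _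
    (measurable_gammaPDF a r) (ae_of_all _ fun _ => ENNReal.ofReal_lt_top)]
  simp_rw [Pi.mul_apply, mul_comm (gammaPDF a r _), ofReal_exp_neg_mul_mul_gammaPDF ha hr hrb]
  rw [lintegral_const_mul _ (measurable_gammaPDF a (r + b)),
    lintegral_gammaPDF_eq_one ha hrb, mul_one]

lemma gammaPDF_div {s : ℝ} (hr : 0 ≤ r) (hs : 0 < s) (y : ℝ) :
    gammaPDF a (r / s) y = ENNReal.ofReal s⁻¹ * gammaPDF a r (y / s) := by
  rcases lt_or_ge y 0 with hy | hy
  · rw [gammaPDF_of_neg hy, gammaPDF_of_neg (div_neg_of_neg_of_pos hy hs), mul_zero]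
  rw [gammaPDF_of_nonneg hy, gammaPDF_of_nonneg (div_nonneg hy hs.le),
    ← ENNReal.ofReal_mul (inv_nonneg.2 hs.le)]
  congr 1
  have : exp (-(r / s * y)) = exp (-(r * (y / s))) := by ring_nf
  have h1 : 0 < s ^ a := by positivity
  rw [div_rpow hr hs.le, div_rpow hy hs.le, rpow_sub_one hs.ne', this]
  field_simp

lemma gammaMeasure_map_mul_const (hr : 0 ≤ r) {s : ℝ} (hs : 0 < s) :
    (gammaMeasure a r).map (· * s) = gammaMeasure a (r / s) := by
  rw [gammaMeasure, map_mul_const_volume_withDensity (measurable_gammaPDF a r) hs.ne',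
    abs_of_pos (inv_pos.2 hs), gammaMeasure]
  congr 1
  funext y
  exact (gammaPDF_div hr hs y).symm

end ProbabilityTheory

section Independence

variable {Ω α β : Type*} [MeasurableSpace Ω] [MeasurableSpace α] [MeasurableSpace β]
  {P : Measure Ω} [IsFiniteMeasure P] {X : Ω → α} {Y : Ω → β}

lemma ProbabilityTheory.IndepFun.lintegral_comp_eq_lintegral_lintegral_map (hXY : IndepFun X Y P)
    (hX : Measurable X) (hY : Measurable Y) {f : α → β → ℝ≥0∞}
    (hf : Measurable (Function.uncurry f)) :
    ∫⁻ ω, f (X ω) (Y ω) ∂P = ∫⁻ ω, ∫⁻ x, f x (Y ω) ∂(P.map X) ∂P := by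
  calc ∫⁻ ω, f (X ω) (Y ω) ∂P
      = ∫⁻ p, Function.uncurry f p ∂(P.map fun ω => (X ω, Y ω)) :=
        (lintegral_map hf (hX.prodMk hY)).symm
    _ = ∫⁻ y, ∫⁻ x, f x y ∂(P.map X) ∂(P.map Y) := by
        rw [hXY.map_prod_eq_prod_map_map hX.aemeasurable hY.aemeasurable]
        exact lintegral_prod_symm' _ hf
    _ = ∫⁻ ω, ∫⁻ x, f x (Y ω) ∂(P.map X) ∂P :=
        lintegral_map hf.lintegral_prod_left' hY

end Independence

section Laws

variable {Ω α : Type*} [MeasurableSpace Ω] [MeasurableSpace α] {P : Measure Ω} {X : Ω → α}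

lemma ae_mem_of_map_eq_withDensity_restrict (hX : AEMeasurable X P) {μ : Measure α} {s : Set α}
    (hs : MeasurableSet s) {f : α → ℝ≥0∞} (h : P.map X = (μ.restrict s).withDensity f) :
    ∀ᵐ ω ∂P, X ω ∈ s :=
  ae_of_ae_map hX (h ▸ (withDensity_absolutelyContinuous _ _).ae_le (ae_restrict_mem hs))

variable [IsProbabilityMeasure P] {ν : Measure α} {f : α → ℝ}

lemma lintegral_ofReal_eq_one_of_map_eq_withDensity (hX : AEMeasurable X P)
    (h : P.map X = ν.withDensity fun x => ENNReal.ofReal (f x)) :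
    ∫⁻ x, ENNReal.ofReal (f x) ∂ν = 1 := by
  rw [← setLIntegral_univ, ← withDensity_apply _ MeasurableSet.univ, ← h,
    Measure.map_apply_of_aemeasurable hX MeasurableSet.univ, preimage_univ, measure_univ]

lemma integrable_of_map_eq_withDensity_ofReal (hX : AEMeasurable X P)
    (hf : AEStronglyMeasurable f ν) (hf0 : 0 ≤ᵐ[ν] f)
    (h : P.map X = ν.withDensity fun x => ENNReal.ofReal (f x)) : Integrable f ν :=
  ⟨hf, (hasFiniteIntegral_iff_ofReal hf0).2 <| by
    rw [lintegral_ofReal_eq_one_of_map_eq_withDensity hX h]; exact ENNReal.one_lt_top⟩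

lemma integral_eq_one_of_map_eq_withDensity_ofReal (hX : AEMeasurable X P)
    (hf : AEStronglyMeasurable f ν) (hf0 : 0 ≤ᵐ[ν] f)
    (h : P.map X = ν.withDensity fun x => ENNReal.ofReal (f x)) : ∫ x, f x ∂ν = 1 := by
  rw [integral_eq_lintegral_of_nonneg_ae hf0 hf, lintegral_ofReal_eq_one_of_map_eq_withDensity hX h,
    ENNReal.toReal_one]

end Laws

namespace ProbabilityTheory

variable {Ω : Type*} [MeasurableSpace Ω] {P : Measure Ω} [IsFiniteMeasure P]
  {G X : Ω → ℝ} {a r : ℝ}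

lemma integral_exp_neg_mul_eq_integral_rpow_of_indepFun (hG : Measurable G) (hX : Measurable X)
    (hGlaw : P.map G = gammaMeasure a r) (ha : 0 < a) (hr : 0 < r) (hGX : IndepFun G X P)
    (hX0 : ∀ᵐ ω ∂P, 0 ≤ X ω) :
    ∫ ω, exp (-(X ω * G ω)) ∂P = ∫ ω, (1 + X ω / r) ^ (-a) ∂P := by
  have hlaplace : ∫⁻ ω, ENNReal.ofReal (exp (-(X ω * G ω))) ∂P
      = ∫⁻ ω, ENNReal.ofReal ((1 + X ω / r) ^ (-a)) ∂P := by
    rw [hGX.lintegral_comp_eq_lintegral_lintegral_map (f := fun x y => .ofReal (exp (-(y * x))))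
      hG hX (by fun_prop), hGlaw]
    refine lintegral_congr_ae ?_
    filter_upwards [hX0] with ω hω
    exact lintegral_exp_neg_mul_gammaMeasure ha hr (by linarith)
  rw [integral_eq_lintegral_of_nonneg_ae (ae_of_all _ fun ω => (exp_pos _).le) (by fun_prop),
    integral_eq_lintegral_of_nonneg_ae ?_ (Measurable.aestronglyMeasurable (by fun_prop)),
    hlaplace]
  filter_upwards [hX0] with ω hω
  have := hr.le
  positivity

lemma map_mul_eq_withDensity_lintegral_gammaPDF_of_indepFun {Y : Ω → ℝ} (hG : Measurable G)
    (hY : Measurable Y) (hGlaw : P.map G = gammaMeasure a r) (hr : 0 ≤ r) (hGY : IndepFun G Y P)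
    (hY0 : ∀ᵐ ω ∂P, 0 < Y ω) :
    P.map (fun ω => G ω * Y ω)
      = (volume.restrict (Ioi 0)).withDensity fun t =>
          ∫⁻ y, gammaPDF a (r / y) t ∂(P.map Y) := by
  have hpdf : Measurable fun p : Ω × ℝ => gammaPDF a (r / Y p.1) p.2 :=
    (measurable_uncurry_gammaPDF a).comp
      ((measurable_const.div (hY.comp measurable_fst)).prodMk measurable_snd)
  ext A hA
  have hcond : ∀ᵐ ω ∂P, ∫⁻ x, A.indicator 1 (x * Y ω) ∂(P.map G)
      = ∫⁻ t in A, gammaPDF a (r / Y ω) t ∂(volume.restrict (Ioi 0)) := by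
    filter_upwards [hY0] with ω hω
    change ∫⁻ x, ((· * Y ω) ⁻¹' A).indicator 1 x ∂(P.map G) = _
    rw [lintegral_indicator_one (measurable_mul_const _ hA), hGlaw, ← Measure.map_apply
      (measurable_mul_const _) hA, gammaMeasure_map_mul_const hr hω,
      gammaMeasure_eq_withDensity_Ioi, withDensity_apply _ hA]
  have hGYmeas : Measurable fun ω => G ω * Y ω := hG.mul hY
  rw [Measure.map_apply hGYmeas hA, ← lintegral_indicator_one (hGYmeas hA),
    withDensity_apply _ hA]
  calc ∫⁻ ω, ((fun ω => G ω * Y ω) ⁻¹' A).indicator 1 ω ∂P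
      = ∫⁻ ω, ∫⁻ x, A.indicator 1 (x * Y ω) ∂(P.map G) ∂P :=
        hGY.lintegral_comp_eq_lintegral_lintegral_map (f := fun x y => A.indicator 1 (x * y))
          hG hY ((measurable_one.indicator hA).comp measurable_mul)
    _ = ∫⁻ ω, ∫⁻ t in A, gammaPDF a (r / Y ω) t ∂(volume.restrict (Ioi 0)) ∂P :=
        lintegral_congr_ae hcond
    _ = ∫⁻ t in A, ∫⁻ y, gammaPDF a (r / y) t ∂(P.map Y)
          ∂(volume.restrict (Ioi 0)) := by
        rw [lintegral_lintegral_swap hpdf.aemeasurable]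
        refine lintegral_congr fun t =>
          (lintegral_map (f := fun y => gammaPDF a (r / y) t) ?_ hY).symm
        exact (measurable_uncurry_gammaPDF a).comp
          ((measurable_const.div measurable_id).prodMk measurable_const)

end ProbabilityTheory

section TiltedMixture

variable {θ c K : ℝ} {ξ : ℝ → ℝ}

/-- The density `g` of `G · M` when `G ~ Gamma(θ, 1)` and `M` has density `ξ`. -/
noncomputable def gammaScaleMixtureDensity (θ : ℝ) (ξ : ℝ → ℝ) (t : ℝ) : ℝ :=
  t ^ (θ - 1) / Gamma θ * ∫ m in Ioi 0, exp (-t / m) * m ^ (-θ) * ξ m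

lemma gammaScaleMixtureDensity_nonneg (hθ : 0 < θ) (hξnonneg : ∀ m, 0 ≤ ξ m) {t : ℝ}
    (ht : 0 ≤ t) : 0 ≤ gammaScaleMixtureDensity θ ξ t := by
  have hI : 0 ≤ ∫ m in Ioi 0, exp (-t / m) * m ^ (-θ) * ξ m :=
    setIntegral_nonneg measurableSet_Ioi fun m (hm : 0 < m) => by have := hξnonneg m; positivity
  have := Gamma_pos_of_pos hθ
  unfold gammaScaleMixtureDensity
  positivity

lemma measurable_gammaScaleMixtureDensity (hξmeas : Measurable ξ) :
    Measurable (gammaScaleMixtureDensity θ ξ) :=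
  (by fun_prop : Measurable fun t : ℝ => t ^ (θ - 1) / Gamma θ).mul
    (StronglyMeasurable.integral_prod_right'
      (f := fun p : ℝ × ℝ => exp (-p.1 / p.2) * p.2 ^ (-θ) * ξ p.2) (by fun_prop)).measurable

lemma ofReal_tilted_mul_gammaPDF {m t x : ℝ} (hθ : 0 < θ) (hc : 0 < c) (hK : 0 < K)
    (hm : 0 < m) (ht : 0 < t) (hx : 0 ≤ x) :
    ENNReal.ofReal ((1 + c * m) ^ (-θ) * x / K) * gammaPDF θ (1 / (c * m / (1 + c * m))) t
      = ENNReal.ofReal (exp (-t) * (t / c) ^ (θ - 1) / Gamma θ / (c * K))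
          * ENNReal.ofReal (exp (-(t / c) / m) * m ^ (-θ) * x) := by
  have hΓ := Gamma_pos_of_pos hθ
  rw [gammaPDF_of_nonneg ht.le, ← ENNReal.ofReal_mul (by positivity),
    ← ENNReal.ofReal_mul (by positivity)]
  congr 1
  have h1 : 0 < (1 + c * m) ^ θ := by positivity
  have h2 : 0 < m ^ θ := by positivity
  have h3 : 0 < c ^ θ := by positivity
  have hexp : exp (-t) * exp (-(t / c) / m) = exp (-(1 / (c * m / (1 + c * m)) * t)) := by
    rw [← exp_add]
    congr 1
    field_simp
    ring
  rw [← hexp, one_div_div, div_rpow (by positivity) (by positivity), mul_rpow hc.le hm.le,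
    rpow_neg (by positivity), rpow_neg hm.le, div_rpow ht.le hc.le, rpow_sub_one hc.ne']
  field_simp

lemma lintegral_gammaPDF_map_tilted {t : ℝ} (hθ : 0 < θ) (hc : 0 < c) (hK : 0 < K)
    (hξmeas : Measurable ξ) (hξnonneg : ∀ m, 0 ≤ ξ m) (hξ : IntegrableOn ξ (Ioi 0))
    (ht : 0 < t) :
    ∫⁻ y, gammaPDF θ (1 / y) t ∂(((volume.restrict (Ioi 0)).withDensity fun m =>
        ENNReal.ofReal ((1 + c * m) ^ (-θ) * ξ m / K)).map fun m => c * m / (1 + c * m))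
      = ENNReal.ofReal (exp (-t) * gammaScaleMixtureDensity θ ξ (t / c) / (c * K)) := by
  have hint := integrableOn_exp_neg_div_mul_rpow_neg_mul hθ (div_pos ht hc) hξ
  rw [lintegral_map (f := fun y => gammaPDF θ (1 / y) t) ((measurable_uncurry_gammaPDF θ).comp
      ((measurable_const.div measurable_id).prodMk measurable_const)) (by fun_prop),
    lintegral_withDensity_eq_lintegral_mul_non_measurable _ (by fun_prop)
      (ae_of_all _ fun _ => ENNReal.ofReal_lt_top)]
  simp_rw [Pi.mul_apply]
  rw [setLIntegral_congr_fun measurableSet_Ioi fun m (hm : 0 < m) =>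
      ofReal_tilted_mul_gammaPDF hθ hc hK hm ht (hξnonneg m),
    lintegral_const_mul' _ _ ENNReal.ofReal_ne_top, ← ofReal_integral_eq_lintegral_ofReal hint,
    ← ENNReal.ofReal_mul (by positivity), gammaScaleMixtureDensity]
  · congr 1
    ring
  · filter_upwards [ae_restrict_mem measurableSet_Ioi] with m (hm : 0 < m)
    have := hξnonneg m
    positivity

lemma map_mul_tilted_eq_withDensity {Ω : Type*} [MeasurableSpace Ω] {P : Measure Ω}
    [IsFiniteMeasure P] {G M' : Ω → ℝ} (hGmeas : Measurable G) (hM'meas : Measurable M')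
    (hG : P.map G = gammaMeasure θ 1) (hGM' : IndepFun G M' P)
    (hM' : P.map M' = (volume.restrict (Ioi 0)).withDensity fun m =>
      ENNReal.ofReal ((1 + c * m) ^ (-θ) * ξ m / K))
    (hθ : 0 < θ) (hc : 0 < c) (hK : 0 < K) (hξmeas : Measurable ξ)
    (hξnonneg : ∀ m, 0 ≤ ξ m) (hξ : IntegrableOn ξ (Ioi 0)) :
    P.map (fun ω => G ω * (c * M' ω / (1 + c * M' ω)))
      = (volume.restrict (Ioi 0)).withDensity fun t =>
          ENNReal.ofReal (exp (-t) * gammaScaleMixtureDensity θ ξ (t / c) / (c * K)) := by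
  have hφ : Measurable fun m : ℝ => c * m / (1 + c * m) := by fun_prop
  have hmap : P.map (fun ω => c * M' ω / (1 + c * M' ω))
      = (P.map M').map fun m => c * m / (1 + c * m) := (Measure.map_map hφ hM'meas).symm
  have hM'pos := ae_mem_of_map_eq_withDensity_restrict hM'meas.aemeasurable measurableSet_Ioi hM'
  rw [map_mul_eq_withDensity_lintegral_gammaPDF_of_indepFun
    (Y := fun ω => c * M' ω / (1 + c * M' ω)) hGmeas (hφ.comp hM'meas) hG zero_le_one
    (hGM'.comp measurable_id hφ) (hM'pos.mono fun ω (hω : 0 < M' ω) => by positivity)]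
  refine withDensity_congr_ae ((ae_restrict_iff' measurableSet_Ioi).2 (ae_of_all _ ?_))
  intro t (ht : 0 < t)
  dsimp only
  rw [hmap, hM', lintegral_gammaPDF_map_tilted hθ hc hK hξmeas hξnonneg hξ ht]

end TiltedMixture

/-- Theorem 3.1, exponential tilting of a gamma scale mixture:
with `M` positive with density `ξ` on `(0,∞)`, `G ~ Gamma(θ,1)` independent of `M`,
`T = G·M` with density `g(t) = (t^(θ-1)/Γ(θ)) ∫₀^∞ e^{-t/m} m^{-θ} ξ(m) dm`,
and `K = E[(1+cM)^{-θ}] ∈ (0,∞)`: one has `E[e^{-cT}] = K`, the function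
`t ↦ e^{-t} g(t/c)/(cK)` is a probability density on `(0,∞)`, and it is the density
of `G·(cM′/(1+cM′))` where `M′` has density `m ↦ (1+cm)^{-θ} ξ(m)/K`, independent of `G`. -/
theorem exponential_tilting_gamma_scale_mixture
    {Ω : Type*} [MeasurableSpace Ω] (P : Measure Ω) [IsProbabilityMeasure P]
    (θ c : ℝ) (hθ : 0 < θ) (hc : 0 < c)
    (ξ : ℝ → ℝ) (hξmeas : Measurable ξ) (hξnonneg : ∀ m, 0 ≤ ξ m)
    (M G M' : Ω → ℝ)
    (hMmeas : Measurable M) (hGmeas : Measurable G) (hM'meas : Measurable M')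
    (hM : Measure.map M P
      = (volume.restrict (Set.Ioi (0:ℝ))).withDensity fun m => ENNReal.ofReal (ξ m))
    (hG : Measure.map G P = gammaMeasure θ 1)
    (hGM : IndepFun G M P)
    (K : ℝ) (hKdef : K = ∫ ω, (1 + c * M ω) ^ (-θ) ∂P) (hKpos : 0 < K)
    (hM' : Measure.map M' P
      = (volume.restrict (Set.Ioi (0:ℝ))).withDensity fun m =>
          ENNReal.ofReal ((1 + c * m) ^ (-θ) * ξ m / K))
    (hGM' : IndepFun G M' P)
    (g : ℝ → ℝ)
    (hg : ∀ t, g t = t ^ (θ - 1) / Real.Gamma θ *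
        ∫ m in Set.Ioi (0:ℝ), Real.exp (-t / m) * m ^ (-θ) * ξ m) :
    (∫ ω, Real.exp (-(c * (G ω * M ω))) ∂P = K) ∧
    (∀ t ∈ Set.Ioi (0:ℝ), 0 ≤ Real.exp (-t) * g (t / c) / (c * K)) ∧
    (∫ t in Set.Ioi (0:ℝ), Real.exp (-t) * g (t / c) / (c * K) = 1) ∧
    (Measure.map (fun ω => G ω * (c * M' ω / (1 + c * M' ω))) P
      = (volume.restrict (Set.Ioi (0:ℝ))).withDensity fun t =>
          ENNReal.ofReal (Real.exp (-t) * g (t / c) / (c * K))) := by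
  obtain rfl : g = gammaScaleMixtureDensity θ ξ := funext hg
  have hMpos := ae_mem_of_map_eq_withDensity_restrict hMmeas.aemeasurable measurableSet_Ioi hM
  have hξ : IntegrableOn ξ (Ioi 0) := integrable_of_map_eq_withDensity_ofReal hMmeas.aemeasurable
    hξmeas.aestronglyMeasurable (ae_of_all _ hξnonneg) hM
  have hnonneg : ∀ t ∈ Ioi (0 : ℝ),
      0 ≤ exp (-t) * gammaScaleMixtureDensity θ ξ (t / c) / (c * K) := fun t (ht : 0 < t) => by
    have := gammaScaleMixtureDensity_nonneg hθ hξnonneg (div_pos ht hc).le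
    positivity
  have hlaw := map_mul_tilted_eq_withDensity hGmeas hM'meas hG hGM' hM' hθ hc hKpos hξmeas
    hξnonneg hξ
  refine ⟨?_, hnonneg, ?_, hlaw⟩
  · calc ∫ ω, exp (-(c * (G ω * M ω))) ∂P = ∫ ω, exp (-(c * M ω * G ω)) ∂P := by
          simp_rw [mul_left_comm c, mul_comm (G _)]
      _ = ∫ ω, (1 + c * M ω / 1) ^ (-θ) ∂P :=
          integral_exp_neg_mul_eq_integral_rpow_of_indepFun hGmeas (by fun_prop) hG hθ one_pos
            (hGM.comp measurable_id (measurable_const_mul c))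
            (hMpos.mono fun ω (hω : 0 < M ω) => by positivity)
      _ = K := by simp_rw [div_one, hKdef]
  · have := measurable_gammaScaleMixtureDensity (θ := θ) hξmeas
    exact integral_eq_one_of_map_eq_withDensity_ofReal (by fun_prop)
      (Measurable.aestronglyMeasurable (by fun_prop))
      ((ae_restrict_iff' measurableSet_Ioi).2 (ae_of_all _ hnonneg)) hlaw
end

section
/- Let W be a random variable with density (1+x)^{-2} on (0,∞), let c > 0 with c ≠ 1, and set A_c = cW/(cW+1). Then for every 0 < y < 1, E[log|y − A_c|] = (y/(c(1−y)+y))·log(y/(c(1−y))) − c·log(c)/(c−1) + log(c(1−y)). (The explicit formula for Φ_{F_{A_c}} in the Remark following Proposition 4.2.) -/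
/-!
With `b = c (1 - y)` and `a = y / b` one has `y - c x / (c x + 1) = b (a - x) / (1 + c x)`,
so `E[log |y - A_c|] = log b + Φ_{F_W}(a) - ψ_{F_W}(c)`. Both
`Φ_{F_W}(a) = ∫ log |a - x| (1 + x)⁻² dx` and `ψ_{F_W}(c) = ∫ log (1 + c x) (1 + x)⁻² dx`
are computed from explicit elementary primitives.
-/

open MeasureTheory ProbabilityTheory
open Real Filter Set Topology

lemma tendsto_affine_div_one_add_atTop (α β : ℝ) :
    Tendsto (fun x : ℝ => (α + β * x) / (1 + x)) atTop (𝓝 β) := by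
  have h0 : Tendsto (fun x : ℝ => x⁻¹) atTop (𝓝 0) := tendsto_inv_atTop_zero
  have h : Tendsto (fun x : ℝ => (α * x⁻¹ + β) / (x⁻¹ + 1)) atTop (𝓝 β) := by
    simpa [Pi.div_def] using ((h0.const_mul α).add_const β).div (h0.add_const 1) (by norm_num)
  refine h.congr' ?_
  filter_upwards [eventually_gt_atTop 0] with x hx
  field_simp

lemma tendsto_log_affine_div_one_add_atTop (α : ℝ) {β : ℝ} (hβ : 0 < β) :
    Tendsto (fun x : ℝ => log (α + β * x) / (1 + x)) atTop (𝓝 0) := by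
  have hlin : Tendsto (fun x : ℝ => α + β * x) atTop atTop :=
    tendsto_atTop_add_const_left _ α (tendsto_id.const_mul_atTop hβ)
  have hlog : Tendsto (fun x : ℝ => log x / x) atTop (𝓝 0) := by
    simpa using tendsto_pow_log_div_mul_add_atTop 1 0 1 one_ne_zero
  have h := (hlog.comp hlin).mul (tendsto_affine_div_one_add_atTop α β)
  rw [zero_mul] at h
  refine h.congr' ?_
  filter_upwards [hlin.eventually_gt_atTop 0] with x hx
  simp only [Function.comp_apply]
  field_simp

lemma hasDerivAt_neg_inv_one_add {x : ℝ} (hx : 1 + x ≠ 0) :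
    HasDerivAt (fun x : ℝ => -(1 + x)⁻¹) ((1 + x) ^ 2)⁻¹ x := by
  refine (((hasDerivAt_id' x).const_add 1).inv hx).neg.congr_deriv ?_
  rw [neg_div, neg_neg, one_div]

lemma tendsto_neg_inv_one_add_atTop : Tendsto (fun x : ℝ => -(1 + x)⁻¹) atTop (𝓝 0) := by
  simpa using (tendsto_inv_atTop_zero.comp
    (tendsto_atTop_add_const_left _ (1 : ℝ) tendsto_id)).neg

lemma integrableOn_inv_one_add_sq_Ioi : IntegrableOn (fun x : ℝ => ((1 + x) ^ 2)⁻¹) (Ioi 0) :=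
  integrableOn_Ioi_deriv_of_nonneg' (a := 0)
    (fun x (hx : 0 ≤ x) => hasDerivAt_neg_inv_one_add (by grind)) (fun x _ => by positivity)
    tendsto_neg_inv_one_add_atTop

lemma integral_inv_one_add_sq_Ioi : ∫ x in Ioi (0 : ℝ), ((1 + x) ^ 2)⁻¹ = 1 := by
  simpa using integral_Ioi_of_hasDerivAt_of_nonneg' (a := 0)
    (fun x (hx : 0 ≤ x) => hasDerivAt_neg_inv_one_add (by grind))
    (fun x _ => by positivity) tendsto_neg_inv_one_add_atTop

lemma hasDerivAt_log_one_add_mul {c x : ℝ} (hx : 1 + c * x ≠ 0) :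
    HasDerivAt (fun x : ℝ => log (1 + c * x)) (c / (1 + c * x)) x := by
  simpa using (((hasDerivAt_id' x).const_mul c).const_add 1).log hx

noncomputable def logOneAddPrimitive (x : ℝ) : ℝ := -((1 + log (1 + x)) / (1 + x))

lemma hasDerivAt_logOneAddPrimitive {x : ℝ} (hx : 0 ≤ x) :
    HasDerivAt logOneAddPrimitive (log (1 + x) * ((1 + x) ^ 2)⁻¹) x := by
  have h1x : 1 + x ≠ 0 := by positivity
  have hlog := hasDerivAt_log_one_add_mul (c := 1) (x := x) (by simpa using h1x)
  simp only [one_mul] at hlog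
  refine ((hlog.const_add 1).div ((hasDerivAt_id' x).const_add 1) h1x).neg.congr_deriv ?_
  field_simp
  ring

lemma tendsto_logOneAddPrimitive_atTop : Tendsto logOneAddPrimitive atTop (𝓝 0) := by
  have h := ((tendsto_neg_inv_one_add_atTop.neg).add
    (tendsto_log_affine_div_one_add_atTop 1 one_pos)).neg
  simp only [neg_zero, add_zero, one_mul] at h
  refine h.congr' (Eventually.of_forall fun x => ?_)
  simp only [logOneAddPrimitive, neg_neg]
  ring

noncomputable def logOneAddMulPrimitive (c x : ℝ) : ℝ :=
  c / (c - 1) * (log (1 + c * x) - log (1 + x)) - log (1 + c * x) / (1 + x)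

lemma hasDerivAt_logOneAddMulPrimitive {c : ℝ} (hc : 0 < c) (hc1 : c ≠ 1) {x : ℝ}
    (hx : 0 ≤ x) :
    HasDerivAt (logOneAddMulPrimitive c) (log (1 + c * x) * ((1 + x) ^ 2)⁻¹) x := by
  have h1x : 1 + x ≠ 0 := by positivity
  have hlog := hasDerivAt_log_one_add_mul (c := c) (x := x) (by positivity)
  have hlog1 := hasDerivAt_log_one_add_mul (c := 1) (x := x) (by simpa using h1x)
  simp only [one_mul] at hlog1
  refine (((hlog.sub hlog1).const_mul (c / (c - 1))).sub
    (hlog.div ((hasDerivAt_id' x).const_add 1) h1x)).congr_deriv ?_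
  have : c - 1 ≠ 0 := sub_ne_zero.2 hc1
  have : 1 + c * x ≠ 0 := by positivity
  field_simp
  ring

lemma tendsto_logOneAddMulPrimitive_atTop {c : ℝ} (hc : 0 < c) :
    Tendsto (logOneAddMulPrimitive c) atTop (𝓝 (c / (c - 1) * log c)) := by
  have hratio : Tendsto (fun x : ℝ => log ((1 + c * x) / (1 + x))) atTop (𝓝 (log c)) :=
    ((continuousAt_log hc.ne').tendsto).comp (tendsto_affine_div_one_add_atTop 1 c)
  have h := (hratio.const_mul (c / (c - 1))).sub (tendsto_log_affine_div_one_add_atTop 1 hc)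
  rw [sub_zero] at h
  refine h.congr' ?_
  filter_upwards [eventually_gt_atTop 0] with x hx
  rw [logOneAddMulPrimitive, log_div (by positivity) (by positivity)]

lemma integrableOn_log_one_add_mul_mul_inv_one_add_sq_Ioi {c : ℝ} (hc : 0 < c) :
    IntegrableOn (fun x : ℝ => log (1 + c * x) * ((1 + x) ^ 2)⁻¹) (Ioi 0) := by
  have hnonneg : ∀ x ∈ Ioi (0 : ℝ), 0 ≤ log (1 + c * x) * ((1 + x) ^ 2)⁻¹ := fun x hx =>
    mul_nonneg (log_nonneg (by nlinarith [mem_Ioi.1 hx])) (by positivity)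
  rcases eq_or_ne c 1 with rfl | hc1
  · simpa using integrableOn_Ioi_deriv_of_nonneg' (a := 0)
      (fun x (hx : 0 ≤ x) => hasDerivAt_logOneAddPrimitive hx) (by simpa using hnonneg)
      tendsto_logOneAddPrimitive_atTop
  · exact integrableOn_Ioi_deriv_of_nonneg' (a := 0)
      (fun x (hx : 0 ≤ x) => hasDerivAt_logOneAddMulPrimitive hc hc1 hx) hnonneg
      (tendsto_logOneAddMulPrimitive_atTop hc)

lemma integral_log_one_add_mul_mul_inv_one_add_sq_Ioi {c : ℝ} (hc : 0 < c) (hc1 : c ≠ 1) :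
    ∫ x in Ioi (0 : ℝ), log (1 + c * x) * ((1 + x) ^ 2)⁻¹ = c * log c / (c - 1) := by
  rw [integral_Ioi_of_hasDerivAt_of_tendsto' (a := 0)
    (fun x (hx : 0 ≤ x) => hasDerivAt_logOneAddMulPrimitive hc hc1 hx)
    (integrableOn_log_one_add_mul_mul_inv_one_add_sq_Ioi hc)
    (tendsto_logOneAddMulPrimitive_atTop hc)]
  simp only [logOneAddMulPrimitive, mul_zero, add_zero, log_one, sub_self, div_one, sub_zero]
  ring

noncomputable def logAbsSubPrimitive (a x : ℝ) : ℝ :=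
  (x - a) * log (x - a) / ((1 + a) * (1 + x)) - log (1 + x) / (1 + a)

section logAbsSub

variable {a : ℝ} (ha : 0 < a)
include ha

lemma continuousOn_logAbsSubPrimitive : ContinuousOn (logAbsSubPrimitive a) (Ici 0) := by
  intro x (hx : 0 ≤ x)
  have h1x : 1 + x ≠ 0 := by positivity
  have h1a : 1 + a ≠ 0 := by positivity
  refine ContinuousAt.continuousWithinAt (ContinuousAt.sub ?_ ?_)
  · exact ((continuous_mul_log.comp (continuous_sub_right a)).continuousAt).div (by fun_prop)
      (mul_ne_zero h1a h1x)
  · exact ((continuousAt_log h1x).comp (by fun_prop)).div_const _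

lemma hasDerivAt_logAbsSubPrimitive {x : ℝ} (hx : 0 ≤ x) (hxa : x ≠ a) :
    HasDerivAt (logAbsSubPrimitive a) (log |a - x| * ((1 + x) ^ 2)⁻¹) x := by
  have h1x : 1 + x ≠ 0 := by positivity
  have h1a : 1 + a ≠ 0 := by positivity
  have hxa' : x - a ≠ 0 := sub_ne_zero.2 hxa
  have hsub : HasDerivAt (fun x : ℝ => x - a) 1 x := (hasDerivAt_id' x).sub_const a
  have hden : HasDerivAt (fun x : ℝ => (1 + a) * (1 + x)) (1 + a) x := by
    simpa using ((hasDerivAt_id' x).const_add 1).const_mul (1 + a)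
  have hlog1 := hasDerivAt_log_one_add_mul (c := 1) (x := x) (by simpa using h1x)
  simp only [one_mul] at hlog1
  refine (((hsub.mul (hsub.log hxa')).div hden (mul_ne_zero h1a h1x)).sub
    (hlog1.div_const (1 + a))).congr_deriv ?_
  rw [abs_sub_comm, log_abs]
  simp only [Pi.mul_apply]
  field_simp
  ring

lemma tendsto_logAbsSubPrimitive_atTop : Tendsto (logAbsSubPrimitive a) atTop (𝓝 0) := by
  have hratio : Tendsto (fun x : ℝ => log ((-a + 1 * x) / (1 + x))) atTop (𝓝 0) := by
    simpa [Function.comp_def] using ((continuousAt_log one_ne_zero).tendsto).comp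
      (tendsto_affine_div_one_add_atTop (-a) 1)
  have h := (hratio.const_mul (1 / (1 + a))).sub
    (tendsto_log_affine_div_one_add_atTop (-a) one_pos)
  simp only [mul_zero, sub_zero] at h
  refine h.congr' ?_
  filter_upwards [eventually_gt_atTop a] with x hx
  have hxa : 0 < x - a := by linarith
  have h1x : 0 < 1 + x := by linarith
  have h1a : 1 + a ≠ 0 := by positivity
  rw [logAbsSubPrimitive, one_mul, ← sub_eq_neg_add, log_div hxa.ne' h1x.ne']
  field_simp
  ring

-- On `(a, ∞)` the integrand is bounded above by `log (1 + x) * (1 + x)⁻²`, and the difference has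
-- an explicit primitive; a nonnegative derivative with a limit at infinity is integrable.
lemma integrableOn_log_abs_sub_mul_inv_one_add_sq_Ioi_self :
    IntegrableOn (fun x : ℝ => log |a - x| * ((1 + x) ^ 2)⁻¹) (Ioi a) := by
  have hdiff : IntegrableOn (fun x : ℝ => log (1 + x) * ((1 + x) ^ 2)⁻¹
      - log |a - x| * ((1 + x) ^ 2)⁻¹) (Ioi a) := by
    refine integrableOn_Ioi_deriv_of_nonneg (l := 0) (g := fun x => logOneAddPrimitive x
      - logAbsSubPrimitive a x) ?_ (fun x (hx : a < x) => ?_) (fun x (hx : a < x) => ?_) ?_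
    · exact (hasDerivAt_logOneAddPrimitive ha.le).continuousAt.continuousWithinAt.sub
        ((continuousOn_logAbsSubPrimitive ha).mono (Ici_subset_Ici.2 ha.le) a self_mem_Ici)
    · exact (hasDerivAt_logOneAddPrimitive (by linarith)).sub
        (hasDerivAt_logAbsSubPrimitive ha (by linarith) hx.ne')
    · rw [← sub_mul, abs_sub_comm, abs_of_pos (by linarith)]
      exact mul_nonneg (sub_nonneg.2 (log_le_log (by linarith) (by linarith))) (by positivity)
    · simpa using tendsto_logOneAddPrimitive_atTop.sub (tendsto_logAbsSubPrimitive_atTop ha)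
  have hlog : IntegrableOn (fun x : ℝ => log (1 + x) * ((1 + x) ^ 2)⁻¹) (Ioi a) := by
    simpa using (integrableOn_log_one_add_mul_mul_inv_one_add_sq_Ioi one_pos).mono_set
      (Ioi_subset_Ioi ha.le)
  exact (hlog.sub hdiff).congr_fun (fun x _ => sub_sub_cancel _ _) measurableSet_Ioi

-- On `(0, a]` the integrand is bounded above by `log a * (1 + x)⁻²`; same argument.
lemma integrableOn_log_abs_sub_mul_inv_one_add_sq_Ioc :
    IntegrableOn (fun x : ℝ => log |a - x| * ((1 + x) ^ 2)⁻¹) (Ioc 0 a) := by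
  have hdiff : IntegrableOn (fun x : ℝ => log a * ((1 + x) ^ 2)⁻¹
      - log |a - x| * ((1 + x) ^ 2)⁻¹) (Ioc 0 a) := by
    refine intervalIntegral.integrableOn_deriv_of_nonneg (g := fun x => log a * -(1 + x)⁻¹
      - logAbsSubPrimitive a x) ?_ (fun x hx => ?_) (fun x hx => ?_)
    · refine ContinuousOn.sub (fun x (hx : x ∈ Icc 0 a) => ?_)
        ((continuousOn_logAbsSubPrimitive ha).mono Icc_subset_Ici_self)
      exact ((hasDerivAt_neg_inv_one_add (by linarith [hx.1])).continuousAt.const_mul _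
        ).continuousWithinAt
    · exact ((hasDerivAt_neg_inv_one_add (by linarith [hx.1])).const_mul _).sub
        (hasDerivAt_logAbsSubPrimitive ha hx.1.le hx.2.ne)
    · rw [← sub_mul, abs_of_pos (by linarith [hx.2])]
      exact mul_nonneg (sub_nonneg.2 (log_le_log (by linarith [hx.2]) (by linarith [hx.1])))
        (by positivity)
  have hlog : IntegrableOn (fun x : ℝ => log a * ((1 + x) ^ 2)⁻¹) (Ioc 0 a) :=
    (integrableOn_inv_one_add_sq_Ioi.mono_set Ioc_subset_Ioi_self).const_mul _
  exact (hlog.sub hdiff).congr_fun (fun x _ => sub_sub_cancel _ _) measurableSet_Ioc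

lemma integrableOn_log_abs_sub_mul_inv_one_add_sq_Ioi :
    IntegrableOn (fun x : ℝ => log |a - x| * ((1 + x) ^ 2)⁻¹) (Ioi 0) := by
  rw [← Ioc_union_Ioi_eq_Ioi ha.le]
  exact (integrableOn_log_abs_sub_mul_inv_one_add_sq_Ioc ha).union
    (integrableOn_log_abs_sub_mul_inv_one_add_sq_Ioi_self ha)

lemma integral_log_abs_sub_mul_inv_one_add_sq_Ioi :
    ∫ x in Ioi (0 : ℝ), log |a - x| * ((1 + x) ^ 2)⁻¹ = a / (1 + a) * log a := by
  have hIoc : ∫ x in Ioc 0 a, log |a - x| * ((1 + x) ^ 2)⁻¹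
      = logAbsSubPrimitive a a - logAbsSubPrimitive a 0 := by
    rw [← intervalIntegral.integral_of_le ha.le]
    exact intervalIntegral.integral_eq_sub_of_hasDerivAt_of_le ha.le
      ((continuousOn_logAbsSubPrimitive ha).mono Icc_subset_Ici_self)
      (fun x hx => hasDerivAt_logAbsSubPrimitive ha hx.1.le hx.2.ne)
      ((intervalIntegrable_iff_integrableOn_Ioc_of_le ha.le).2
        (integrableOn_log_abs_sub_mul_inv_one_add_sq_Ioc ha))
  have hIoi : ∫ x in Ioi a, log |a - x| * ((1 + x) ^ 2)⁻¹ = 0 - logAbsSubPrimitive a a :=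
    integral_Ioi_of_hasDerivAt_of_tendsto
      ((continuousOn_logAbsSubPrimitive ha).mono (Ici_subset_Ici.2 ha.le) a self_mem_Ici)
      (fun x (hx : a < x) => hasDerivAt_logAbsSubPrimitive ha (by linarith) hx.ne')
      (integrableOn_log_abs_sub_mul_inv_one_add_sq_Ioi_self ha)
      (tendsto_logAbsSubPrimitive_atTop ha)
  rw [← Ioc_union_Ioi_eq_Ioi ha.le, setIntegral_union (Ioc_disjoint_Ioi le_rfl) measurableSet_Ioi
    (integrableOn_log_abs_sub_mul_inv_one_add_sq_Ioc ha)
    (integrableOn_log_abs_sub_mul_inv_one_add_sq_Ioi_self ha), hIoc, hIoi]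
  simp only [logAbsSubPrimitive, sub_self, log_zero, mul_zero, zero_div, zero_sub, log_neg_eq_log,
    neg_mul, add_zero, mul_one, log_one, sub_zero, sub_neg_eq_add, zero_add]
  ring

end logAbsSub

lemma integral_comp_eq_setIntegral_inv_one_add_sq {Ω : Type*} [MeasurableSpace Ω]
    {P : Measure Ω} {W : Ω → ℝ} (hWmeas : Measurable W)
    (hW : Measure.map W P = (volume.restrict (Ioi (0 : ℝ))).withDensity fun x =>
      ENNReal.ofReal ((1 + x) ^ (-2 : ℝ)))
    {g : ℝ → ℝ} (hg : Measurable g) :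
    ∫ ω, g (W ω) ∂P = ∫ x in Ioi (0 : ℝ), ((1 + x) ^ 2)⁻¹ * g x := by
  rw [← integral_map hWmeas.aemeasurable hg.aestronglyMeasurable, hW,
    integral_withDensity_eq_integral_toReal_smul (by fun_prop)
      (ae_of_all _ fun _ => ENNReal.ofReal_lt_top)]
  refine setIntegral_congr_fun measurableSet_Ioi fun x (hx : 0 < x) => ?_
  rw [ENNReal.toReal_ofReal (by positivity), rpow_neg (by positivity), rpow_two, smul_eq_mul]

lemma log_sub_mul_div_mul_add_one {c y x : ℝ} (hcy : c * (1 - y) ≠ 0) (hx : c * x + 1 ≠ 0)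
    (hxa : x ≠ y / (c * (1 - y))) :
    log (y - c * x / (c * x + 1))
      = log (c * (1 - y)) + log (y / (c * (1 - y)) - x) - log (1 + c * x) := by
  have hxa' : y / (c * (1 - y)) - x ≠ 0 := sub_ne_zero.2 hxa.symm
  have hx' : 1 + c * x ≠ 0 := by rwa [add_comm]
  have hsplit : y - c * x / (c * x + 1) = c * (1 - y) * (y / (c * (1 - y)) - x) / (1 + c * x) := by
    rw [mul_sub, mul_div_cancel₀ _ hcy]
    field_simp
    ring
  rw [hsplit, log_div (mul_ne_zero hcy hxa') hx', log_mul hcy hxa']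

theorem phi_of_tilted_ratio_exponentials_general
    {Ω : Type*} [MeasurableSpace Ω] (P : Measure Ω)
    (W : Ω → ℝ) (hWmeas : Measurable W)
    (hW : Measure.map W P
      = (volume.restrict (Set.Ioi (0:ℝ))).withDensity fun x =>
          ENNReal.ofReal ((1 + x) ^ (-2 : ℝ)))
    (c : ℝ) (hc : 0 < c) (hc1 : c ≠ 1)
    (y : ℝ) (hy0 : 0 < y) (hy1 : y < 1) :
    ∫ ω, Real.log |y - c * W ω / (c * W ω + 1)| ∂P
      = y / (c * (1 - y) + y) * Real.log (y / (c * (1 - y)))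
        - c * Real.log c / (c - 1) + Real.log (c * (1 - y)) := by
  set b := c * (1 - y)
  have hb : 0 < b := mul_pos hc (by linarith)
  have ha : 0 < y / b := by positivity
  have hsplit : (fun x => ((1 + x) ^ 2)⁻¹ * log |y - c * x / (c * x + 1)|)
      =ᵐ[volume.restrict (Ioi 0)] fun x => log b * ((1 + x) ^ 2)⁻¹
        + log |y / b - x| * ((1 + x) ^ 2)⁻¹ - log (1 + c * x) * ((1 + x) ^ 2)⁻¹ := by
    filter_upwards [ae_restrict_mem measurableSet_Ioi, Measure.ae_ne _ (y / b)]
      with x (hx : 0 < x) hxa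
    rw [log_abs, log_abs, log_sub_mul_div_mul_add_one hb.ne' (by positivity) hxa]
    ring
  have hconst : IntegrableOn (fun x : ℝ => log b * ((1 + x) ^ 2)⁻¹) (Ioi 0) :=
    integrableOn_inv_one_add_sq_Ioi.const_mul _
  have hsum : IntegrableOn (fun x : ℝ => log b * ((1 + x) ^ 2)⁻¹
      + log |y / b - x| * ((1 + x) ^ 2)⁻¹) (Ioi 0) :=
    hconst.add (integrableOn_log_abs_sub_mul_inv_one_add_sq_Ioi ha)
  rw [integral_comp_eq_setIntegral_inv_one_add_sq hWmeas hW
      (g := fun x => log |y - c * x / (c * x + 1)|) (by fun_prop), integral_congr_ae hsplit,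
    integral_sub hsum (integrableOn_log_one_add_mul_mul_inv_one_add_sq_Ioi hc),
    integral_add hconst (integrableOn_log_abs_sub_mul_inv_one_add_sq_Ioi ha),
    integral_const_mul, integral_inv_one_add_sq_Ioi, integral_log_abs_sub_mul_inv_one_add_sq_Ioi ha,
    integral_log_one_add_mul_mul_inv_one_add_sq_Ioi hc hc1,
    show y / b / (1 + y / b) = y / (b + y) by field_simp]
  ring

/-- Remark after Proposition 4.2: if `W` has density `(1+x)^{-2}`
on `(0,∞)`, `c > 0`, `c ≠ 1`, and `A_c = cW/(cW+1)`, then for `0 < y < 1`,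
`E[log|y − A_c|] = (y/(c(1−y)+y))·log(y/(c(1−y))) − c·log(c)/(c−1) + log(c(1−y))`. -/
theorem phi_of_tilted_ratio_exponentials
    {Ω : Type*} [MeasurableSpace Ω] (P : Measure Ω) [IsProbabilityMeasure P]
    (W : Ω → ℝ) (hWmeas : Measurable W)
    (hW : Measure.map W P
      = (volume.restrict (Set.Ioi (0:ℝ))).withDensity fun x =>
          ENNReal.ofReal ((1 + x) ^ (-2 : ℝ)))
    (c : ℝ) (hc : 0 < c) (hc1 : c ≠ 1)
    (y : ℝ) (hy0 : 0 < y) (hy1 : y < 1) :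
    ∫ ω, Real.log |y - c * W ω / (c * W ω + 1)| ∂P
      = y / (c * (1 - y) + y) * Real.log (y / (c * (1 - y)))
        - c * Real.log c / (c - 1) + Real.log (c * (1 - y)) :=
  phi_of_tilted_ratio_exponentials_general P W hWmeas hW c hc hc1 y hy0 hy1
end

section
/- For every 0 < α < 1 and every λ ≥ 0, ∫₀¹ (1 + λ·u^{−1/α})^{α−1} du = (1+λ)^α − λ^α. (This is the statement that the Dirichlet mean M_{1−α}(F_{1/𝔾_α}) has the same law as U^{−1/α} for U uniform on [0,1], expressed through the order-(1−α) Cauchy–Stieltjes transform.) -/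
open MeasureTheory Set Real

/-! `u ↦ (u ^ (1/α) + λ) ^ α` is an antiderivative of the integrand on `(0, ∞)`: after factoring
`u ^ (-1/α)` out of `1 + λ u ^ (-1/α)`, the chain rule produces exactly the integrand. It is
continuous on `[0, 1]` with values `λ ^ α` at `0` and `(1 + λ) ^ α` at `1`, and the integrand is
nonnegative, hence integrable, so the fundamental theorem of calculus gives the identity. -/

theorem setIntegral_Ioo_eq_sub_of_hasDerivAt_of_nonneg {g g' : ℝ → ℝ} {a b : ℝ} (hab : a ≤ b)
    (hcont : ContinuousOn g (Icc a b)) (hderiv : ∀ x ∈ Ioo a b, HasDerivAt g (g' x) x)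
    (hg' : ∀ x ∈ Ioo a b, 0 ≤ g' x) :
    ∫ x in Ioo a b, g' x = g b - g a := by
  have hint : IntervalIntegrable g' volume a b :=
    (intervalIntegrable_iff_integrableOn_Ioc_of_le hab).2
      (intervalIntegral.integrableOn_deriv_of_nonneg hcont hderiv hg')
  rw [← integral_Ioc_eq_integral_Ioo, ← intervalIntegral.integral_of_le hab,
    intervalIntegral.integral_eq_sub_of_hasDerivAt_of_le hab hcont hderiv hint]

theorem one_add_mul_rpow_neg_one_div_eq {α l u : ℝ} (hu : 0 < u) :
    1 + l * u ^ (-(1 / α)) = (u ^ (1 / α) + l) * u ^ (-(1 / α)) := by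
  rw [add_mul, ← rpow_add hu, add_neg_cancel, rpow_zero]

theorem hasDerivAt_rpow_one_div_add_rpow {α l u : ℝ} (hα : α ≠ 0) (hl : 0 ≤ l) (hu : 0 < u) :
    HasDerivAt (fun x => (x ^ (1 / α) + l) ^ α) ((1 + l * u ^ (-(1 / α))) ^ (α - 1)) u := by
  have hbase : 0 < u ^ (1 / α) + l := by positivity
  have hinner : HasDerivAt (fun x => x ^ (1 / α) + l) (1 / α * u ^ (1 / α - 1)) u :=
    (hasDerivAt_rpow_const (Or.inl hu.ne')).add_const l
  refine ((hasDerivAt_rpow_const (p := α) (Or.inl hbase.ne')).comp u hinner).congr_deriv ?_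
  have hexp : -(1 / α) * (α - 1) = 1 / α - 1 := by field_simp; ring
  rw [one_add_mul_rpow_neg_one_div_eq hu, mul_rpow hbase.le (rpow_nonneg hu.le _),
    ← rpow_mul hu.le, hexp]
  field_simp

theorem bfry_mean_cauchy_stieltjes_general
    (α : ℝ) (hα0 : 0 < α) (l : ℝ) (hl : 0 ≤ l) :
    ∫ u in Set.Ioo (0:ℝ) 1, (1 + l * u ^ (-(1 / α))) ^ (α - 1)
      = (1 + l) ^ α - l ^ α := by
  have hcont : Continuous fun x : ℝ => (x ^ (1 / α) + l) ^ α :=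
    ((continuous_rpow_const (by positivity)).add continuous_const).rpow_const
      fun _ => Or.inr hα0.le
  rw [setIntegral_Ioo_eq_sub_of_hasDerivAt_of_nonneg zero_le_one hcont.continuousOn
    (fun u hu => hasDerivAt_rpow_one_div_add_rpow hα0.ne' hl hu.1)
    (fun u hu => rpow_nonneg (by have := rpow_nonneg hu.1.le (-(1 / α)); positivity) _)]
  simp [zero_rpow (inv_ne_zero hα0.ne')]

/-- for `0 < α < 1` and `λ ≥ 0`,
`∫₀¹ (1 + λ·u^{−1/α})^{α−1} du = (1+λ)^α − λ^α`. -/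
theorem bfry_mean_cauchy_stieltjes
    (α : ℝ) (hα0 : 0 < α) (hα1 : α < 1) (l : ℝ) (hl : 0 ≤ l) :
    ∫ u in Set.Ioo (0:ℝ) 1, (1 + l * u ^ (-(1 / α))) ^ (α - 1)
      = (1 + l) ^ α - l ^ α :=
  bfry_mean_cauchy_stieltjes_general α hα0 l hl
end

section
/- Let 0 < α < 1 and let B and B′ be independent random variables with distributions Beta(1−α, α) and Beta(α, 1) respectively. Then the random variable B/B′ has density f(x) = (sin(πα)/π)·x^{−α−1}·(1 − (1−x)^α) for 0 < x ≤ 1, and f(x) = (sin(πα)/π)·x^{−α−1} for x > 1. (The density f_{B_α} from the proof of Proposition 5.1.) -/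
/-!
Writing `B ~ F(b) db` and `B' ~ G(y) dy`, independence makes `(B, B')` have density
`F(b) G(y)`, and the substitution `b = y x` in the inner integral shows that `B / B'` has density
`x ↦ ∫ G(y) |y| F(y x) dy`. By the reflection formula `Γ(α) Γ(1 - α) = π / sin (π α)`,
`F(b) = (sin (π α) / π) b^(-α) (1 - b)^(α - 1)` and `G(y) = α y^(α - 1)` on `(0, 1)`, so for
`x > 0` the integrand collapses to `(sin (π α) / π) α x^(-α) (1 - x y)^(α - 1)` on
`0 < y < min 1 x⁻¹`, an elementary integral equal to
`(sin (π α) / π) x^(-α - 1) (1 - (1 - min x 1)^α)`.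
-/

open MeasureTheory ProbabilityTheory

open Set
open scoped ENNReal

theorem lintegral_eq_ofReal_abs_mul_lintegral_comp_mul_left (f : ℝ → ℝ≥0∞) {a : ℝ} (ha : a ≠ 0) :
    ∫⁻ x, f x = ENNReal.ofReal |a| * ∫⁻ x, f (a * x) := by
  have h := lintegral_map_equiv f (MeasurableEquiv.mulLeft₀ a ha) (μ := volume)
  rw [MeasurableEquiv.coe_mulLeft₀, Real.map_volume_mul_left ha, lintegral_smul_measure,
    smul_eq_mul] at h
  rw [← h, ← mul_assoc, ← ENNReal.ofReal_mul (abs_nonneg a), ← abs_mul, mul_inv_cancel₀ ha,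
    abs_one, ENNReal.ofReal_one, one_mul]

theorem map_div_prod_withDensity {f g : ℝ → ℝ≥0∞} (hf : Measurable f) (hg : Measurable g) :
    ((volume.withDensity f).prod (volume.withDensity g)).map (fun p : ℝ × ℝ => p.1 / p.2) =
      volume.withDensity fun x => ∫⁻ y, g y * ENNReal.ofReal |y| * f (y * x) := by
  have hdiv : Measurable fun p : ℝ × ℝ => p.1 / p.2 := measurable_fst.div measurable_snd
  ext s hs
  have rescale (y : ℝ) (hy : y ≠ 0) : ∫⁻ b, s.indicator 1 (b / y) * (f b * g y) =
      ∫⁻ x, g y * ENNReal.ofReal |y| * f (y * x) * s.indicator 1 x := by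
    rw [lintegral_eq_ofReal_abs_mul_lintegral_comp_mul_left _ hy,
      ← lintegral_const_mul' _ _ (by simp)]
    refine lintegral_congr fun x => ?_
    rw [mul_div_cancel_left₀ _ hy]
    ring
  calc _ = ∫⁻ z, s.indicator 1 (z.1 / z.2) * (f z.1 * g z.2) ∂(volume.prod volume) := by
        rw [Measure.map_apply hdiv hs, prod_withDensity hf hg, withDensity_apply _ (hdiv hs),
          ← lintegral_indicator (hdiv hs)]
        refine lintegral_congr fun z => ?_
        by_cases hz : z.1 / z.2 ∈ s <;> simp [hz, indicator]
    _ = ∫⁻ y, ∫⁻ b, s.indicator 1 (b / y) * (f b * g y) :=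
        lintegral_prod_symm' _ (by fun_prop)
    _ = ∫⁻ y, ∫⁻ x, g y * ENNReal.ofReal |y| * f (y * x) * s.indicator 1 x :=
        lintegral_congr_ae ((volume.ae_ne 0).mono rescale)
    _ = ∫⁻ x, ∫⁻ y, g y * ENNReal.ofReal |y| * f (y * x) * s.indicator 1 x :=
        lintegral_lintegral_swap (by fun_prop)
    _ = _ := by
        rw [withDensity_apply _ hs, ← lintegral_indicator hs]
        refine lintegral_congr fun x => ?_
        by_cases hx : x ∈ s <;> simp [hx]

theorem IndepFun.map_div_eq_withDensity {Ω : Type*} [MeasurableSpace Ω] {P : Measure Ω}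
    [IsFiniteMeasure P] {X Y : Ω → ℝ} (hX : Measurable X) (hY : Measurable Y)
    {f g : ℝ → ℝ≥0∞} (hf : Measurable f) (hg : Measurable g) (hXY : IndepFun X Y P)
    (hXf : P.map X = volume.withDensity f) (hYg : P.map Y = volume.withDensity g) :
    P.map (fun ω => X ω / Y ω) =
      volume.withDensity fun x => ∫⁻ y, g y * ENNReal.ofReal |y| * f (y * x) := by
  rw [← map_div_prod_withDensity hf hg, ← hXf, ← hYg,
    ← (indepFun_iff_map_prod_eq_prod_map_map hX.aemeasurable hY.aemeasurable).1 hXY,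
    Measure.map_map (by fun_prop) (by fun_prop)]
  rfl

theorem betaMeasure_one_sub_self (α : ℝ) :
    _root_.betaMeasure (1 - α) α = volume.withDensity ((Ioo 0 1).indicator fun y =>
      ENNReal.ofReal (Real.sin (Real.pi * α) / Real.pi * y ^ (-α) * (1 - y) ^ (α - 1))) := by
  rw [_root_.betaMeasure, ← withDensity_indicator measurableSet_Ioo, sub_add_cancel,
    Real.Gamma_one, mul_comm (Real.Gamma _), Real.Gamma_mul_Gamma_one_sub, one_div_div,
    sub_sub_cancel_left]

theorem betaMeasure_self_one {α : ℝ} (hα : 0 < α) :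
    _root_.betaMeasure α 1 = volume.withDensity ((Ioo 0 1).indicator fun y =>
      ENNReal.ofReal (α * y ^ (α - 1))) := by
  rw [_root_.betaMeasure, ← withDensity_indicator measurableSet_Ioo, Real.Gamma_add_one hα.ne',
    Real.Gamma_one, mul_one, mul_div_cancel_right₀ _ (Real.Gamma_pos_of_pos hα).ne', sub_self]
  simp_rw [Real.rpow_zero, mul_one]

theorem intervalIntegrable_one_sub_mul_rpow {α : ℝ} (hα : 0 < α) {x : ℝ} (hx : x ≠ 0) (m : ℝ) :
    IntervalIntegrable (fun y => (1 - x * y) ^ (α - 1)) volume 0 m := by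
  have h := ((intervalIntegral.intervalIntegrable_rpow' (by linarith : -1 < α - 1)
    (a := 1 - x * m) (b := 1)).comp_sub_left 1).comp_mul_left (c := x)
  simp only [sub_sub_cancel, sub_self, mul_div_cancel_left₀ _ hx, zero_div] at h
  exact h.symm

theorem integral_one_sub_mul_rpow {α : ℝ} (hα : 0 < α) {x : ℝ} (hx : x ≠ 0) (m : ℝ) :
    ∫ y in (0:ℝ)..m, (1 - x * y) ^ (α - 1) = (1 - (1 - x * m) ^ α) / (α * x) := by
  rw [intervalIntegral.integral_comp_mul_left (fun t => (1 - t) ^ (α - 1)) hx, mul_zero,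
    intervalIntegral.integral_comp_sub_left (fun u => u ^ (α - 1)),
    integral_rpow (Or.inl (by linarith)), sub_zero, sub_add_cancel, Real.one_rpow, smul_eq_mul,
    inv_mul_eq_div, div_div, mul_comm x]

theorem lintegral_Ioo_one_sub_mul_rpow {α x m : ℝ} (hα : 0 < α) (hx : 0 < x) (hm : 0 ≤ m)
    (hxm : x * m ≤ 1) :
    ∫⁻ y in Ioo 0 m, ENNReal.ofReal ((1 - x * y) ^ (α - 1)) =
      ENNReal.ofReal ((1 - (1 - x * m) ^ α) / (α * x)) := by
  have hint := (intervalIntegrable_iff_integrableOn_Ioo_of_le hm).1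
    (intervalIntegrable_one_sub_mul_rpow hα hx.ne' m)
  have hnonneg : 0 ≤ᵐ[volume.restrict (Ioo 0 m)] fun y => (1 - x * y) ^ (α - 1) := by
    refine (ae_restrict_iff' measurableSet_Ioo).2 (ae_of_all _ fun y hy => ?_)
    exact Real.rpow_nonneg (by nlinarith [hy.2]) _
  rw [← ofReal_integral_eq_lintegral_ofReal hint hnonneg, ← integral_Ioc_eq_integral_Ioo,
    ← intervalIntegral.integral_of_le hm, integral_one_sub_mul_rpow hα hx.ne']

theorem mem_Ioo_min_one_inv_iff {x y : ℝ} (hx : 0 < x) :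
    y ∈ Ioo 0 (min 1 x⁻¹) ↔ y ∈ Ioo 0 1 ∧ y * x ∈ Ioo 0 1 := by
  simp only [mem_Ioo, lt_min_iff, ← one_div, lt_div_iff₀ hx, mul_pos_iff_of_pos_right hx]
  tauto

theorem betaQuotient_integrand_eq {α c x : ℝ} (hα : 0 ≤ α) (hx : 0 < x) (y : ℝ) :
    (Ioo 0 1).indicator (fun y => ENNReal.ofReal (α * y ^ (α - 1))) y * ENNReal.ofReal |y| *
        (Ioo 0 1).indicator (fun b => ENNReal.ofReal (c * b ^ (-α) * (1 - b) ^ (α - 1))) (y * x) =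
      ENNReal.ofReal (c * α * x ^ (-α)) *
        (Ioo 0 (min 1 x⁻¹)).indicator (fun y => ENNReal.ofReal ((1 - x * y) ^ (α - 1))) y := by
  by_cases hy : y ∈ Ioo 0 (min 1 x⁻¹)
  · obtain ⟨hy1, hyx⟩ := (mem_Ioo_min_one_inv_iff hx).1 hy
    have hy0 : 0 < y := hy1.1
    rw [indicator_of_mem hy1, indicator_of_mem hyx, indicator_of_mem hy, abs_of_pos hy0,
      ← ENNReal.ofReal_mul (by positivity), ← ENNReal.ofReal_mul (by positivity),
      ← ENNReal.ofReal_mul' (Real.rpow_nonneg (by linarith [hyx.2, mul_comm x y]) _)]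
    have hpow : y ^ (α - 1) * y * y ^ (-α) = 1 := by
      rw [← Real.rpow_add_one hy0.ne', ← Real.rpow_add hy0]; norm_num
    rw [Real.mul_rpow hy0.le hx.le, mul_comm y x]
    congr 1
    linear_combination (c * α * x ^ (-α) * (1 - x * y) ^ (α - 1)) * hpow
  · rw [indicator_of_notMem hy, mul_zero]
    rw [mem_Ioo_min_one_inv_iff hx, not_and_or] at hy
    rcases hy with hy | hy <;> simp [indicator_of_notMem hy]

theorem lintegral_betaQuotient_integrand {α c : ℝ} (hα : 0 < α) (x : ℝ) :
    ∫⁻ y, (Ioo 0 1).indicator (fun y => ENNReal.ofReal (α * y ^ (α - 1))) y * ENNReal.ofReal |y| *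
        (Ioo 0 1).indicator (fun b => ENNReal.ofReal (c * b ^ (-α) * (1 - b) ^ (α - 1))) (y * x) =
      (Ioi 0).indicator (fun x => ENNReal.ofReal (if x ≤ 1 then
          c * x ^ (-α - 1) * (1 - (1 - x) ^ α) else c * x ^ (-α - 1))) x := by
  rcases le_or_gt x 0 with hx | hx
  · rw [indicator_of_notMem (show x ∉ Ioi 0 from not_lt.2 hx)]
    refine lintegral_eq_zero_of_ae_eq_zero (ae_of_all _ fun y => ?_)
    by_cases hy : y ∈ Ioo 0 1
    · have hyx : y * x ∉ Ioo 0 1 := fun h =>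
        (mul_nonpos_of_nonneg_of_nonpos hy.1.le hx).not_gt h.1
      simp [indicator_of_notMem hyx]
    · simp [indicator_of_notMem hy]
  have hxm : x * min 1 x⁻¹ = min x 1 := by
    rw [mul_min_of_nonneg _ _ hx.le, mul_one, mul_inv_cancel₀ hx.ne']
  have hmin : 0 ≤ 1 - min x 1 ∧ 1 - min x 1 ≤ 1 := ⟨by simp, by simp [hx.le]⟩
  have hnonneg : 0 ≤ (1 - (1 - min x 1) ^ α) / (α * x) :=
    div_nonneg (sub_nonneg.2 (Real.rpow_le_one hmin.1 hmin.2 hα.le)) (by positivity)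
  simp_rw [betaQuotient_integrand_eq hα.le hx]
  rw [lintegral_const_mul _ ((by fun_prop : Measurable _).indicator measurableSet_Ioo),
    lintegral_indicator measurableSet_Ioo,
    lintegral_Ioo_one_sub_mul_rpow hα hx (by positivity) (by rw [hxm]; exact min_le_right _ _),
    hxm, ← ENNReal.ofReal_mul' hnonneg, indicator_of_mem (mem_Ioi.2 hx),
    Real.rpow_sub_one hx.ne']
  congr 1
  split_ifs with hx1
  · rw [min_eq_left hx1]
    field_simp
  · rw [min_eq_right (le_of_not_ge hx1), sub_self, Real.zero_rpow hα.ne', sub_zero]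
    field_simp

theorem beta_ratio_density_general
    {Ω : Type*} [MeasurableSpace Ω] (P : Measure Ω) [IsProbabilityMeasure P]
    (α : ℝ) (hα0 : 0 < α)
    (B B' : Ω → ℝ) (hBmeas : Measurable B) (hB'meas : Measurable B')
    (hB : Measure.map B P = _root_.betaMeasure (1 - α) α)
    (hB' : Measure.map B' P = _root_.betaMeasure α 1)
    (hindep : IndepFun B B' P) :
    Measure.map (fun ω => B ω / B' ω) P
      = (volume.restrict (Set.Ioi (0:ℝ))).withDensity fun x =>
          ENNReal.ofReal (if x ≤ 1 then
              Real.sin (Real.pi * α) / Real.pi * x ^ (-α - 1) * (1 - (1 - x) ^ α)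
            else Real.sin (Real.pi * α) / Real.pi * x ^ (-α - 1)) := by
  rw [IndepFun.map_div_eq_withDensity hBmeas hB'meas
      ((by fun_prop : Measurable _).indicator measurableSet_Ioo)
      ((by fun_prop : Measurable _).indicator measurableSet_Ioo) hindep
      (hB.trans (betaMeasure_one_sub_self α)) (hB'.trans (betaMeasure_self_one hα0)),
    ← withDensity_indicator measurableSet_Ioi]
  congr 1
  funext x
  exact lintegral_betaQuotient_integrand hα0 x

/-- density `f_{B_α}` from the proof of Proposition 5.1: for
`B ~ Beta(1−α,α)` and `B′ ~ Beta(α,1)` independent, `B/B′` has density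
`(sin(πα)/π)·x^{−α−1}·(1 − (1−x)^α)` for `0 < x ≤ 1` and `(sin(πα)/π)·x^{−α−1}`
for `x > 1`. -/
theorem beta_ratio_density
    {Ω : Type*} [MeasurableSpace Ω] (P : Measure Ω) [IsProbabilityMeasure P]
    (α : ℝ) (hα0 : 0 < α) (hα1 : α < 1)
    (B B' : Ω → ℝ) (hBmeas : Measurable B) (hB'meas : Measurable B')
    (hB : Measure.map B P = _root_.betaMeasure (1 - α) α)
    (hB' : Measure.map B' P = _root_.betaMeasure α 1)
    (hindep : IndepFun B B' P) :
    Measure.map (fun ω => B ω / B' ω) P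
      = (volume.restrict (Set.Ioi (0:ℝ))).withDensity fun x =>
          ENNReal.ofReal (if x ≤ 1 then
              Real.sin (Real.pi * α) / Real.pi * x ^ (-α - 1) * (1 - (1 - x) ^ α)
            else Real.sin (Real.pi * α) / Real.pi * x ^ (-α - 1)) :=
  beta_ratio_density_general P α hα0 B B' hBmeas hB'meas hB hB' hindep
end
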